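/- Assume the Weil bound: for p prime > 3 and any cubic polynomial f over Z_p with nonzero leading coefficient, |Σ_{x∈Z_p} ω^{f(x)}| ≤ 2√p. Then every eigenvalue of the operator S = Σ_{B∈Z_p} |ψ_B^{-B(B+2^{-1})}⟩⟨ψ_B^{-B(B+2^{-1})}| is at most 4 (for p > 3), i.e., the operator norm of S is at most 4. -/

import Mathlib

open Complex Matrix BigOperators Finset
open scoped Kronecker

noncomputable section

/-- Additive character `a ↦ exp(2πi a/p)` on `ZMod p`. -/
def chi (p : ℕ) (a : ZMod p) : ℂ := Complex.exp (2 * Real.pi * Complex.I * (a.val : ℂ) / p)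

/-- The shift operator `X : |j⟩ ↦ |j+1⟩`. -/
def Xop (p : ℕ) : Matrix (ZMod p) (ZMod p) ℂ := fun j k => if j = k + 1 then 1 else 0

/-- The clock operator `Z : |j⟩ ↦ ω^j |j⟩`. -/
def Zop (p : ℕ) : Matrix (ZMod p) (ZMod p) ℂ := Matrix.diagonal (fun j => chi p j)

/-- Weyl-Heisenberg displacement operator `D_(x|z) = ω^{2⁻¹ x z} X^x Z^z`. -/
def Dop (p : ℕ) [NeZero p] (x z : ZMod p) : Matrix (ZMod p) (ZMod p) ℂ :=
  chi p ((2 : ZMod p)⁻¹ * x * z) • (Xop p ^ x.val * Zop p ^ z.val)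

/-- The stabilizer MUB vector `|ψ_B^V⟩ = p^{-1/2} Σ_k ω^{2⁻¹ B k² - V k} |k⟩`. -/
def psi (p : ℕ) (B V : ZMod p) : ZMod p → ℂ :=
  fun k => ((Real.sqrt p : ℂ))⁻¹ * chi p ((2 : ZMod p)⁻¹ * B * k ^ 2 - V * k)

/-- The magic state `|f_{a,b,c}⟩ = p^{-1/2} Σ_k ω^{a k³ + b k² + c k} |k⟩`. -/
def magic (p : ℕ) (a b c : ZMod p) : ZMod p → ℂ :=
  fun k => ((Real.sqrt p : ℂ))⁻¹ * chi p (a * k ^ 3 + b * k ^ 2 + c * k)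

/-- Rank-one projector `|v⟩⟨v|`. -/
def proj (p : ℕ) (v : ZMod p → ℂ) : Matrix (ZMod p) (ZMod p) ℂ :=
  fun i j => v i * (starRingEnd ℂ) (v j)

/-- The single-qudit operator `S = Σ_B |ψ_B^{-B(B+2⁻¹)}⟩⟨ψ_B^{-B(B+2⁻¹)}|`. -/
def Sop (p : ℕ) [NeZero p] : Matrix (ZMod p) (ZMod p) ℂ :=
  ∑ B : ZMod p, proj p (psi p B (-B * (B + (2 : ZMod p)⁻¹)))

/-!
With `q_c(x) = -x³/12 - x²/8 + c x`, the phase of `ψ_B^{-B(B+2⁻¹)}` is the finite difference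
`q_c(x) - q_c(x + 2B)` up to a constant. Hence each magic state `f_c = |f_{-1/12,-1/8,c}⟩` is an
eigenvector of `S` with eigenvalue `|T_c|²/p`, where `T_c = Σ_x ω^{q_c(x)}`. The `f_c` are the
Fourier basis twisted by a fixed unimodular function, so every eigenvector of the Hermitian `S`
has nonzero overlap with some `f_c`, and its eigenvalue is then `|T_c|²/p ≤ (2√p)²/p = 4` by
the Weil bound.
-/

section Characters

variable {p : ℕ} [NeZero p]

lemma chi_eq_stdAddChar : chi p = ⇑(ZMod.stdAddChar : AddChar (ZMod p) ℂ) := by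
  funext a
  rw [ZMod.stdAddChar_apply, ZMod.toCircle_apply]
  rfl

lemma chi_add (a b : ZMod p) : chi p (a + b) = chi p a * chi p b := by
  simp only [chi_eq_stdAddChar, AddChar.map_add_eq_mul]

lemma conj_chi (a : ZMod p) : starRingEnd ℂ (chi p a) = chi p (-a) := by
  simp only [chi_eq_stdAddChar, AddChar.map_neg_eq_conj]

lemma star_mul_chi (a b : ZMod p) :
    star ((Real.sqrt p : ℂ)⁻¹ * chi p a) * ((Real.sqrt p : ℂ)⁻¹ * chi p b)
      = (p : ℂ)⁻¹ * chi p (-a + b) := by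
  have hsq : ((Real.sqrt p : ℂ)⁻¹) ^ 2 = (p : ℂ)⁻¹ := by
    rw [inv_pow, ← Complex.ofReal_pow, Real.sq_sqrt (Nat.cast_nonneg p), Complex.ofReal_natCast]
  rw [star_mul', Complex.star_def, conj_chi, map_inv₀, Complex.conj_ofReal, chi_add, ← hsq]
  ring

end Characters

section Hermitian

variable {n : Type*} [Fintype n] {R : Type*} [Field R] [StarRing R]

lemma Matrix.IsHermitian.eq_star_of_mulVec_eq_smul {A : Matrix n n R} (hA : A.IsHermitian)
    {v w : n → R} {μ ν : R} (hv : A *ᵥ v = μ • v) (hw : A *ᵥ w = ν • w)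
    (hvw : star w ⬝ᵥ v ≠ 0) : μ = star ν := by
  refine mul_right_cancel₀ hvw ?_
  calc μ * (star w ⬝ᵥ v) = star w ⬝ᵥ (A *ᵥ v) := by rw [hv, dotProduct_smul, smul_eq_mul]
    _ = star (A *ᵥ w) ⬝ᵥ v := by rw [dotProduct_mulVec, star_mulVec, hA.eq]
    _ = star ν * (star w ⬝ᵥ v) := by rw [hw, star_smul, smul_dotProduct, smul_eq_mul]

end Hermitian

section Projectors

variable {p : ℕ}

lemma proj_eq_vecMulVec (v : ZMod p → ℂ) : proj p v = vecMulVec v (star v) := rfl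

lemma isHermitian_proj (v : ZMod p → ℂ) : (proj p v).IsHermitian := by
  rw [proj_eq_vecMulVec, IsHermitian, conjTranspose_vecMulVec, star_star]

variable [NeZero p]

lemma proj_mulVec (v w : ZMod p → ℂ) : proj p v *ᵥ w = (star v ⬝ᵥ w) • v := by
  rw [proj_eq_vecMulVec, vecMulVec_mulVec, op_smul_eq_smul]

lemma isHermitian_Sop : (Sop p).IsHermitian :=
  (isSelfAdjoint_sum _ fun _ _ => (isHermitian_proj _).isSelfAdjoint).isHermitian

lemma Sop_mulVec (w : ZMod p → ℂ) :
    Sop p *ᵥ w = ∑ B, (star (psi p B (-B * (B + 2⁻¹))) ⬝ᵥ w) • psi p B (-B * (B + 2⁻¹)) := by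
  simp only [Sop, sum_mulVec, proj_mulVec]

end Projectors

section Phases

variable {F : Type*} [Field F]

def cubicPhase (c x : F) : F := -12⁻¹ * x ^ 3 + -8⁻¹ * x ^ 2 + c * x

lemma twelve_ne_zero_of_two_three (h2 : (2 : F) ≠ 0) (h3 : (3 : F) ≠ 0) : (12 : F) ≠ 0 := by
  rw [show (12 : F) = 2 ^ 2 * 3 by norm_num]
  exact mul_ne_zero (pow_ne_zero _ h2) h3

lemma sopPhase_eq (h2 : (2 : F) ≠ 0) (h3 : (3 : F) ≠ 0) (B c x : F) :
    2⁻¹ * B * x ^ 2 - -B * (B + 2⁻¹) * x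
      = cubicPhase c x - cubicPhase c (x + 2 * B) + cubicPhase c (2 * B) := by
  have h8 : (8 : F) ≠ 0 := by
    rw [show (8 : F) = 2 ^ 3 by norm_num]
    exact pow_ne_zero _ h2
  have h12 := twelve_ne_zero_of_two_three h2 h3
  unfold cubicPhase
  field_simp
  ring

lemma cubicPhase_eq_add (c x : F) : cubicPhase c x = cubicPhase 0 x + x * c := by
  unfold cubicPhase; ring

end Phases

lemma Fintype.sum_add_mul_comp {F M : Type*} [Field F] [Fintype F] [AddCommMonoid M]
    {a : F} (ha : a ≠ 0) (b : F) (g : F → M) : ∑ x, g (b + a * x) = ∑ x, g x :=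
  Fintype.sum_equiv ((Equiv.mulLeft₀ a ha).trans (Equiv.addLeft b)) _ _ fun _ => rfl

lemma ZMod.natCast_ne_zero_of_lt {n p : ℕ} (hn : n ≠ 0) (hnp : n < p) : (n : ZMod p) ≠ 0 := by
  rw [Ne, ZMod.natCast_eq_zero_iff]
  exact fun h => absurd (Nat.le_of_dvd (Nat.pos_of_ne_zero hn) h) (by omega)

def cubicSum (p : ℕ) [Fact p.Prime] (c : ZMod p) : ℂ := ∑ x, chi p (cubicPhase c x)

section CubicMagic

variable {p : ℕ} [Fact p.Prime]

lemma magic_apply (c k : ZMod p) :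
    magic p (-12⁻¹) (-8⁻¹) c k = (Real.sqrt p : ℂ)⁻¹ * chi p (cubicPhase c k) := rfl

lemma psi_apply_eq_cubicPhase (h2 : (2 : ZMod p) ≠ 0) (h3 : (3 : ZMod p) ≠ 0)
    (B c x : ZMod p) :
    psi p B (-B * (B + 2⁻¹)) x = (Real.sqrt p : ℂ)⁻¹ *
      chi p (cubicPhase c x - cubicPhase c (x + 2 * B) + cubicPhase c (2 * B)) := by
  rw [psi, sopPhase_eq h2 h3 B c x]

lemma star_psi_dotProduct_magic (h2 : (2 : ZMod p) ≠ 0) (h3 : (3 : ZMod p) ≠ 0) (B c : ZMod p) :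
    star (psi p B (-B * (B + 2⁻¹))) ⬝ᵥ magic p (-12⁻¹) (-8⁻¹) c
      = (p : ℂ)⁻¹ * chi p (-cubicPhase c (2 * B)) * cubicSum p c := by
  simp only [dotProduct, Pi.star_apply, psi_apply_eq_cubicPhase h2 h3 B c, magic_apply,
    star_mul_chi]
  have hphase : ∀ x : ZMod p, -(cubicPhase c x - cubicPhase c (x + 2 * B) + cubicPhase c (2 * B))
      + cubicPhase c x = cubicPhase c (x + 2 * B) + -cubicPhase c (2 * B) := fun x => by ring
  simp only [hphase, chi_add]
  rw [cubicSum, Finset.mul_sum]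
  exact Fintype.sum_equiv (Equiv.addRight (2 * B)) _ _ fun x => by
    simp only [Equiv.coe_addRight]; ring

lemma Sop_mulVec_magic (h2 : (2 : ZMod p) ≠ 0) (h3 : (3 : ZMod p) ≠ 0) (c : ZMod p) :
    Sop p *ᵥ magic p (-12⁻¹) (-8⁻¹) c
      = ((‖cubicSum p c‖ ^ 2 / p : ℝ) : ℂ) • magic p (-12⁻¹) (-8⁻¹) c := by
  funext i
  have hterm : ∀ B : ZMod p, chi p (-cubicPhase c (2 * B)) *
      chi p (cubicPhase c i - cubicPhase c (i + 2 * B) + cubicPhase c (2 * B))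
        = chi p (cubicPhase c i) * star (chi p (cubicPhase c (i + 2 * B))) := fun B => by
    rw [Complex.star_def, conj_chi, ← chi_add, ← chi_add]
    congr 1
    ring
  have hstar : ∑ B : ZMod p, star (chi p (cubicPhase c (i + 2 * B))) = star (cubicSum p c) := by
    rw [Fintype.sum_add_mul_comp h2 i fun x => star (chi p (cubicPhase c x)), cubicSum,
      star_sum]
  simp only [Sop_mulVec, Finset.sum_apply, Pi.smul_apply, smul_eq_mul,
    star_psi_dotProduct_magic h2 h3, psi_apply_eq_cubicPhase h2 h3 _ c, magic_apply]
  calc ∑ B : ZMod p, (p : ℂ)⁻¹ * chi p (-cubicPhase c (2 * B)) * cubicSum p c *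
          ((Real.sqrt p : ℂ)⁻¹ *
            chi p (cubicPhase c i - cubicPhase c (i + 2 * B) + cubicPhase c (2 * B)))
      = (p : ℂ)⁻¹ * cubicSum p c * ((Real.sqrt p : ℂ)⁻¹ * chi p (cubicPhase c i)) *
          ∑ B : ZMod p, star (chi p (cubicPhase c (i + 2 * B))) := by
        rw [Finset.mul_sum]
        refine Finset.sum_congr rfl fun B _ => ?_
        linear_combination (p : ℂ)⁻¹ * cubicSum p c * (Real.sqrt p : ℂ)⁻¹ * hterm B
    _ = _ := by
        rw [hstar, Complex.star_def]
        push_cast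
        linear_combination (p : ℂ)⁻¹ * ((Real.sqrt p : ℂ)⁻¹ * chi p (cubicPhase c i)) *
          Complex.mul_conj' (cubicSum p c)

lemma exists_star_magic_dotProduct_ne_zero {v : ZMod p → ℂ} (hv : v ≠ 0) :
    ∃ c, star (magic p (-12⁻¹) (-8⁻¹) c) ⬝ᵥ v ≠ 0 := by
  set Φ : ZMod p → ℂ := fun k => chi p (-cubicPhase 0 k) * v k
  have hΦ : Φ ≠ 0 := fun h => hv <| funext fun k =>
    (mul_eq_zero.mp (congrFun h k)).resolve_left (Complex.exp_ne_zero _)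
  obtain ⟨c, hc⟩ : ∃ c, ZMod.dft Φ c ≠ 0 := by
    by_contra! h
    exact hΦ ((LinearEquiv.map_eq_zero_iff ZMod.dft).mp (funext h))
  refine ⟨c, ?_⟩
  have hdft : star (magic p (-12⁻¹) (-8⁻¹) c) ⬝ᵥ v = (Real.sqrt p : ℂ)⁻¹ * ZMod.dft Φ c := by
    rw [ZMod.dft_apply, dotProduct, Finset.mul_sum]
    refine Finset.sum_congr rfl fun k _ => ?_
    simp only [Pi.star_apply, magic_apply, star_mul', Complex.star_def, map_inv₀,
      Complex.conj_ofReal, conj_chi, ← chi_eq_stdAddChar, smul_eq_mul, Φ]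
    rw [cubicPhase_eq_add c k, neg_add, chi_add]
    ring
  rw [hdft]
  exact mul_ne_zero (inv_ne_zero (by simp [(Fact.out : p.Prime).ne_zero])) hc

end CubicMagic

theorem stmt11 (p : ℕ) [Fact p.Prime] (hp3 : 3 < p)
    (weil : ∀ a b c : ZMod p, a ≠ 0 →
      ‖∑ x : ZMod p, chi p (a * x ^ 3 + b * x ^ 2 + c * x)‖ ≤ 2 * Real.sqrt p) :
    ∀ μ : ℂ, (∃ v : ZMod p → ℂ, v ≠ 0 ∧ Sop p *ᵥ v = μ • v) → ‖μ‖ ≤ 4 := by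
  rintro μ ⟨v, hv, hSv⟩
  have h2 : (2 : ZMod p) ≠ 0 := by exact_mod_cast ZMod.natCast_ne_zero_of_lt two_ne_zero (by omega)
  have h3 : (3 : ZMod p) ≠ 0 := by exact_mod_cast ZMod.natCast_ne_zero_of_lt three_ne_zero hp3
  obtain ⟨c, hc⟩ := exists_star_magic_dotProduct_ne_zero hv
  have hweil : ‖cubicSum p c‖ ≤ 2 * Real.sqrt p :=
    weil _ _ c (neg_ne_zero.mpr (inv_ne_zero (twelve_ne_zero_of_two_three h2 h3)))
  have hp : (0 : ℝ) < p := by exact_mod_cast (Fact.out : p.Prime).pos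
  rw [isHermitian_Sop.eq_star_of_mulVec_eq_smul hSv (Sop_mulVec_magic h2 h3 c) hc,
    Complex.star_def, Complex.conj_ofReal, Complex.norm_of_nonneg (by positivity),
    div_le_iff₀ hp]
  calc ‖cubicSum p c‖ ^ 2 ≤ (2 * Real.sqrt p) ^ 2 := by gcongr
    _ = 4 * (p : ℝ) := by rw [mul_pow, Real.sq_sqrt hp.le]; norm_num
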